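/- arXiv:1801.04032 — 2 statements merged into one kernel-verified Lean document; each statement's English description precedes it below -/
import Mathlib

section
/- Let F be a type of fields, Store = F → ℤ, and let op₁, …, op_n be store transformers where each op_i reads only R_i ⊆ F and writes only W_i ⊆ F. Call indices i, j conflicting if (R_i ∩ W_j) ∪ (R_j ∩ W_i) ∪ (W_i ∩ W_j) ≠ ∅. If σ_perm : {1..n} → {1..n} is a permutation such that for every conflicting pair i < j one has σ_perm⁻¹ applied preserves their order (i.e., the positions of i and j in the permuted sequence occur in the same relative order as in the original), then for every initial store σ, applying op₁, …, op_n in the original order and applying them in the permuted order yield the same final store. (Conflict-equivalence implies final-state equivalence.) -/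
/-- A store transformer `f` on stores `F → ℤ` *reads only* `R` and *writes only*
`W` when: for every store `σ` and field `x ∉ W`, `f σ x = σ x`; and for all
stores `σ, σ'` agreeing on `R`, the results `f σ` and `f σ'` agree on `W`. -/
def ReadsOnlyWritesOnly {F : Type*} (f : (F → ℤ) → (F → ℤ)) (R W : Set F) : Prop :=
  (∀ (σ : F → ℤ) (x : F), x ∉ W → f σ x = σ x) ∧
  (∀ σ σ' : F → ℤ, (∀ x ∈ R, σ x = σ' x) → ∀ x ∈ W, f σ x = f σ' x)

/-- Apply a sequence of store transformers, left to right, to an initial store. -/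
def applySeq {F : Type*} (ops : List ((F → ℤ) → (F → ℤ))) (σ : F → ℤ) : F → ℤ :=
  ops.foldl (fun τ op => op τ) σ


/-! Every pair of operations whose relative order the permutation reverses is conflict-free, and
conflict-free transformers commute. So the first operation of the original sequence commutes
with everything the permuted sequence schedules before it and can be moved to the front; the
rest follows by induction. -/

section
variable {F : Type*}

@[simp]
lemma applySeq_cons (op : (F → ℤ) → (F → ℤ)) (ops : List ((F → ℤ) → (F → ℤ))) (σ : F → ℤ) :
    applySeq (op :: ops) σ = applySeq ops (op σ) := rfl

lemma ReadsOnlyWritesOnly.apply_apply_of_notMem {f g : (F → ℤ) → (F → ℤ)}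
    {Rf Wf Rg Wg : Set F} (hf : ReadsOnlyWritesOnly f Rf Wf) (hg : ReadsOnlyWritesOnly g Rg Wg)
    (hd : Disjoint Rf Wg) {x : F} (hx : x ∉ Wg) (σ : F → ℤ) :
    f (g σ) x = g (f σ) x := by
  rw [hg.1 _ x hx]
  by_cases hxf : x ∈ Wf
  · exact hf.2 _ _ (fun y hy => hg.1 σ y (hd.notMem_of_mem_left hy)) x hxf
  · rw [hf.1 _ x hxf, hf.1 _ x hxf, hg.1 _ x hx]

theorem ReadsOnlyWritesOnly.commute {f g : (F → ℤ) → (F → ℤ)} {Rf Wf Rg Wg : Set F}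
    (hf : ReadsOnlyWritesOnly f Rf Wf) (hg : ReadsOnlyWritesOnly g Rg Wg)
    (hfg : Disjoint Rf Wg) (hgf : Disjoint Rg Wf) (hW : Disjoint Wf Wg) :
    Function.Commute f g := by
  intro σ
  funext x
  by_cases hx : x ∈ Wg
  · exact (hg.apply_apply_of_notMem hf hgf (hW.notMem_of_mem_right hx) σ).symm
  · exact hf.apply_apply_of_notMem hg hfg hx σ

lemma applySeq_append_cons_of_commute {pre post : List ((F → ℤ) → (F → ℤ))}
    {op : (F → ℤ) → (F → ℤ)} (h : ∀ g ∈ pre, Function.Commute g op) (σ : F → ℤ) :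
    applySeq (pre ++ op :: post) σ = applySeq (op :: (pre ++ post)) σ := by
  induction pre generalizing σ with
  | nil => rfl
  | cons g pre ih =>
    rw [List.forall_mem_cons] at h
    simp only [List.cons_append, applySeq_cons, ih h.2, h.1 σ]

theorem applySeq_map_eq_of_perm {ι : Type*} (f : ι → (F → ℤ) → (F → ℤ)) (r : ι → ι → Prop)
    {l l' : List ι} (hl : l.Pairwise r) (hperm : l'.Perm l)
    (hl' : l'.Pairwise fun i j => r j i → Function.Commute (f i) (f j)) (σ : F → ℤ) :
    applySeq (l'.map f) σ = applySeq (l.map f) σ := by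
  induction l generalizing l' σ with
  | nil => rw [List.perm_nil.mp hperm]
  | cons a t ih =>
    obtain ⟨pre, post, rfl⟩ := List.append_of_mem (hperm.mem_iff.mpr List.mem_cons_self)
    rw [List.pairwise_cons] at hl
    have ht : (pre ++ post).Perm t := (List.perm_middle.symm.trans hperm).cons_inv
    have hcomm : ∀ i ∈ pre, Function.Commute (f i) (f a) := fun i hi =>
      List.pairwise_append.mp hl' |>.2.2 i hi a List.mem_cons_self
        (hl.1 i (ht.subset (List.mem_append_left post hi)))
    have hrest := hl'.sublist ((List.sublist_cons_self a post).append_left pre)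
    rw [List.map_append, List.map_cons, applySeq_append_cons_of_commute
      (List.forall_mem_map.mpr hcomm), applySeq_cons, ← List.map_append, ih hl.2 ht hrest]
    rfl

end

/-- (Conflict-equivalence implies final-state equivalence.)
Given store transformers `op 0, …, op (n-1)` reading only `R i` and writing only
`W i`, call `i, j` conflicting if `(R i ∩ W j) ∪ (R j ∩ W i) ∪ (W i ∩ W j) ≠ ∅`.
If `p` is a permutation of `Fin n` (sending each index to its position in the
permuted sequence) such that every conflicting pair `i < j` keeps its relative
order (`p i < p j`), then for every initial store, applying the operations in
the original order and in the permuted order yields the same final store. -/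
theorem conflict_preserving_perm_final_state {F : Type*} (n : ℕ)
    (ops : Fin n → ((F → ℤ) → (F → ℤ))) (R W : Fin n → Set F)
    (h : ∀ i, ReadsOnlyWritesOnly (ops i) (R i) (W i))
    (p : Equiv.Perm (Fin n))
    (hp : ∀ i j : Fin n, ((R i ∩ W j) ∪ (R j ∩ W i) ∪ (W i ∩ W j)) ≠ ∅ →
      i < j → p i < p j) :
    ∀ σ : F → ℤ,
      applySeq (List.ofFn ops) σ = applySeq (List.ofFn (fun k => ops (p.symm k))) σ := by
  intro σ
  have hcomm : (List.ofFn p.symm).Pairwise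
      fun i j => j < i → Function.Commute (ops i) (ops j) := by
    refine List.pairwise_ofFn.mpr fun a b hab hba => ?_
    have hfree : (R (p.symm b) ∩ W (p.symm a)) ∪ (R (p.symm a) ∩ W (p.symm b)) ∪
        (W (p.symm b) ∩ W (p.symm a)) = ∅ := by
      by_contra hconflict
      exact hab.not_gt (by simpa using hp _ _ hconflict hba)
    simp only [Set.union_empty_iff, ← Set.disjoint_iff_inter_eq_empty] at hfree
    exact (h _).commute (h _) hfree.1.2 hfree.1.1 hfree.2.symm
  have hperm : (List.ofFn p.symm).Perm (List.finRange n) := by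
    simpa [← List.ofFn_id] using Equiv.Perm.ofFn_comp_perm p.symm id
  have key := applySeq_map_eq_of_perm ops (· < ·) (List.pairwise_lt_finRange n) hperm hcomm σ
  rwa [List.map_ofFn, ← List.ofFn_eq_map, eq_comm] at key
end

section
/- Let F be a type of fields, Store = F → ℤ, and let f, g be store transformers reading only R_f, R_g and writing only W_f, W_g respectively, with (R_f ∩ W_g) ∪ (R_g ∩ W_f) ∪ (W_f ∩ W_g) = ∅ (f and g do not conflict). Then for any sequence of store transformers h₁, …, h_k and p₁, …, p_m and any initial store σ, executing p₁, …, p_m, f, g, h₁, …, h_k and executing p₁, …, p_m, g, f, h₁, …, h_k from σ yield the same final store; i.e., swapping two adjacent non-conflicting operations anywhere in a sequence preserves the final state. -/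
namespace ReadsOnlyWritesOnly

variable {F : Type*} {f g : (F → ℤ) → (F → ℤ)} {Rf Wf Rg Wg : Set F}

theorem apply_of_notMem (hf : ReadsOnlyWritesOnly f Rf Wf) (σ : F → ℤ) {x : F}
    (hx : x ∉ Wf) : f σ x = σ x :=
  hf.1 σ x hx

theorem apply_apply_of_mem (hf : ReadsOnlyWritesOnly f Rf Wf)
    (hg : ReadsOnlyWritesOnly g Rg Wg) (hRfWg : Disjoint Rf Wg) (hW : Disjoint Wf Wg)
    (σ : F → ℤ) {x : F} (hx : x ∈ Wf) : g (f σ) x = f (g σ) x := by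
  rw [hg.apply_of_notMem _ (hW.notMem_of_mem_left hx)]
  exact hf.2 σ (g σ) (fun y hy ↦ (hg.apply_of_notMem σ (hRfWg.notMem_of_mem_left hy)).symm) x hx

theorem apply_comm (hf : ReadsOnlyWritesOnly f Rf Wf) (hg : ReadsOnlyWritesOnly g Rg Wg)
    (hRfWg : Disjoint Rf Wg) (hRgWf : Disjoint Rg Wf) (hW : Disjoint Wf Wg) (σ : F → ℤ) :
    g (f σ) = f (g σ) := by
  funext x
  by_cases hxf : x ∈ Wf
  · exact hf.apply_apply_of_mem hg hRfWg hW σ hxf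
  by_cases hxg : x ∈ Wg
  · exact (hg.apply_apply_of_mem hf hRgWf hW.symm σ hxg).symm
  rw [hg.apply_of_notMem _ hxg, hf.apply_of_notMem _ hxf, hf.apply_of_notMem _ hxf,
    hg.apply_of_notMem _ hxg]

end ReadsOnlyWritesOnly

theorem applySeq_append_pair_append {F : Type*} (ps hs : List ((F → ℤ) → (F → ℤ)))
    (f g : (F → ℤ) → (F → ℤ)) (σ : F → ℤ) :
    applySeq (ps ++ [f, g] ++ hs) σ = applySeq hs (g (f (applySeq ps σ))) := by
  simp only [applySeq, List.foldl_append, List.foldl_cons, List.foldl_nil]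

/-- Let `f, g` be store transformers reading only `R_f, R_g` and
writing only `W_f, W_g`, with `(R_f ∩ W_g) ∪ (R_g ∩ W_f) ∪ (W_f ∩ W_g) = ∅`
(`f` and `g` do not conflict). Then for any sequences `p₁, …, p_m` and
`h₁, …, h_k` of store transformers and any initial store `σ`, executing
`p₁, …, p_m, f, g, h₁, …, h_k` and `p₁, …, p_m, g, f, h₁, …, h_k` from `σ`
yields the same final store. -/
theorem swap_adjacent_nonconflicting {F : Type*} (f g : (F → ℤ) → (F → ℤ))
    (Rf Wf Rg Wg : Set F)
    (hf : ReadsOnlyWritesOnly f Rf Wf) (hg : ReadsOnlyWritesOnly g Rg Wg)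
    (hconf : ((Rf ∩ Wg) ∪ (Rg ∩ Wf) ∪ (Wf ∩ Wg)) = ∅) :
    ∀ (ps hs : List ((F → ℤ) → (F → ℤ))) (σ : F → ℤ),
      applySeq (ps ++ [f, g] ++ hs) σ = applySeq (ps ++ [g, f] ++ hs) σ := by
  obtain ⟨⟨hRfWg, hRgWf⟩, hW⟩ := by simpa only [Set.union_empty_iff] using hconf
  intro ps hs σ
  rw [applySeq_append_pair_append, applySeq_append_pair_append,
    hf.apply_comm hg (Set.disjoint_iff_inter_eq_empty.2 hRfWg)
      (Set.disjoint_iff_inter_eq_empty.2 hRgWf) (Set.disjoint_iff_inter_eq_empty.2 hW)]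
end
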